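/- arXiv:1305.1276 — 6 statements merged into one kernel-verified Lean document; each statement's English description precedes it below -/
import Mathlib

section
/- Suppose (h*, Q*) ∈ Λ̃ is a dynamic user equilibrium with elastic demand (E-DUE). Then (h*, Q*) solves the variational inequality VI(Ψ, Θ), i.e. ∑_{p∈P} ∫_{t0}^{tf} Ψ_p(t, h*)(h_p(t) − h*_p(t)) dt − ∑_{ij∈W} Θ_ij[Q*](Q_ij − Q*_ij) ≥ 0 for every (h, Q) ∈ Λ̃. (Necessity part of Theorem 3.1.) -/
open MeasureTheory Set

/-- A path-flow vector: each `h p` is measurable, a.e. nonnegative on `[t0, tf]`,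
and square-integrable on `[t0, tf]`. -/
def IsPathFlow {P : Type*} (t0 tf : ℝ) (h : P → ℝ → ℝ) : Prop :=
  ∀ p, Measurable (h p) ∧
    (∀ᵐ t ∂(volume.restrict (Icc t0 tf)), 0 ≤ h p t) ∧
    MemLp (h p) 2 (volume.restrict (Icc t0 tf))

/-- Membership in the feasible set `Λ̃`. -/
def Feasible {P W : Type*} [Fintype P] [DecidableEq W] (t0 tf : ℝ) (w : P → W)
    (h : P → ℝ → ℝ) (Q : W → ℝ) : Prop :=
  IsPathFlow t0 tf h ∧
    ∀ ij, 0 ≤ Q ij ∧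
      (∑ p ∈ Finset.univ.filter (fun p => w p = ij), ∫ t in Icc t0 tf, h p t) = Q ij

/-- `(h, Q)` is a dynamic user equilibrium with elastic demand. -/
def IsEDUE {P W : Type*} (t0 tf : ℝ) (w : P → W)
    (Ψ : (P → ℝ → ℝ) → P → ℝ → ℝ) (Θ : (W → ℝ) → W → ℝ)
    (h : P → ℝ → ℝ) (Q : W → ℝ) : Prop :=
  ∀ p,
    (∀ᵐ t ∂(volume.restrict (Icc t0 tf)), 0 < h p t → Ψ h p t = Θ Q (w p)) ∧
    (∀ᵐ t ∂(volume.restrict (Icc t0 tf)), Θ Q (w p) ≤ Ψ h p t)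

/-!
On every path, complementarity turns `∫ Ψ h* · h*` into `Θ(w p) · ∫ h*`, while `Θ(w p) ≤ Ψ` and
`h ≥ 0` give `Θ(w p) · ∫ h ≤ ∫ Ψ h* · h`. Summing over paths, the demand constraints regroup
`∑ p Θ(w p) · ∫ h p` into `∑ ij Θ ij · Q ij`, for `(h, Q)` and `(h*, Q*)` alike.
-/

section PathwiseInequality

variable {α : Type*} [MeasurableSpace α] {μ : Measure α} {c f g : α → ℝ} {θ : ℝ}

theorem integral_mul_eq_const_mul_integral_of_complementary (hf : 0 ≤ᵐ[μ] f)
    (hcompl : ∀ᵐ t ∂μ, 0 < f t → c t = θ) :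
    ∫ t, c t * f t ∂μ = θ * ∫ t, f t ∂μ := by
  rw [← integral_const_mul]
  refine integral_congr_ae ?_
  filter_upwards [hf, hcompl] with t hft hct
  rcases hft.lt_or_eq with hpos | hzero
  · rw [hct hpos]
  · simp [← hzero]

theorem const_mul_integral_le_integral_mul (hg : 0 ≤ᵐ[μ] g) (hθ : ∀ᵐ t ∂μ, θ ≤ c t)
    (hgi : Integrable g μ) (hcg : Integrable (fun t => c t * g t) μ) :
    θ * ∫ t, g t ∂μ ≤ ∫ t, c t * g t ∂μ := by
  rw [← integral_const_mul]
  refine integral_mono_ae (hgi.const_mul θ) hcg ?_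
  filter_upwards [hg, hθ] with t hgt hθt
  exact mul_le_mul_of_nonneg_right hθt hgt

theorem const_mul_sub_integral_le_integral_mul_sub (hf : 0 ≤ᵐ[μ] f) (hg : 0 ≤ᵐ[μ] g)
    (hcompl : ∀ᵐ t ∂μ, 0 < f t → c t = θ) (hθ : ∀ᵐ t ∂μ, θ ≤ c t) (hgi : Integrable g μ)
    (hcf : Integrable (fun t => c t * f t) μ) (hcg : Integrable (fun t => c t * g t) μ) :
    θ * (∫ t, g t ∂μ - ∫ t, f t ∂μ) ≤ ∫ t, c t * (g t - f t) ∂μ := by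
  simp only [mul_sub]
  rw [integral_sub hcg hcf, integral_mul_eq_const_mul_integral_of_complementary hf hcompl]
  exact sub_le_sub_right (const_mul_integral_le_integral_mul hg hθ hgi hcg) _

end PathwiseInequality

theorem Finset.sum_mul_sum_fiberwise {ι κ R : Type*} [NonUnitalNonAssocSemiring R] [Fintype ι]
    [Fintype κ] [DecidableEq κ] (g : ι → κ) (a : κ → R) (x : ι → R) :
    ∑ j, a j * ∑ i ∈ univ.filter (fun i => g i = j), x i = ∑ i, a (g i) * x i := by
  rw [← Finset.sum_fiberwise univ g (fun i => a (g i) * x i)]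
  refine Finset.sum_congr rfl fun j _ => ?_
  rw [Finset.mul_sum]
  exact Finset.sum_congr rfl fun i hi => by rw [(Finset.mem_filter.mp hi).2]

section PathFlow

variable {P W : Type*} {t0 tf : ℝ}

theorem IsPathFlow.integrable {h : P → ℝ → ℝ} (hh : IsPathFlow t0 tf h) (p : P) :
    IntegrableOn (h p) (Icc t0 tf) :=
  (hh p).2.2.integrable one_le_two

theorem IsPathFlow.integrable_mul {h : P → ℝ → ℝ} (hh : IsPathFlow t0 tf h) (p : P)
    {c : ℝ → ℝ} (hc : MemLp c 2 (volume.restrict (Icc t0 tf))) :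
    IntegrableOn (fun t => c t * h p t) (Icc t0 tf) :=
  hc.integrable_mul (hh p).2.2

theorem Feasible.sum_mul_demand [Fintype P] [Fintype W] [DecidableEq W] {w : P → W}
    {h : P → ℝ → ℝ} {Q : W → ℝ} (hfeas : Feasible t0 tf w h Q) (a : W → ℝ) :
    ∑ ij, a ij * Q ij = ∑ p, a (w p) * ∫ t in Icc t0 tf, h p t := by
  simp only [← fun ij => (hfeas.2 ij).2]
  exact Finset.sum_mul_sum_fiberwise w a _

end PathFlow

theorem edue_solves_vi_general {P W : Type*} [Fintype P] [Fintype W] [DecidableEq W]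
    (t0 tf : ℝ) (w : P → W)
    (Ψ : (P → ℝ → ℝ) → P → ℝ → ℝ) (Θ : (W → ℝ) → W → ℝ)
    (hΨ : ∀ h : P → ℝ → ℝ, IsPathFlow t0 tf h → ∀ p,
      Measurable (Ψ h p) ∧ (∀ t ∈ Icc t0 tf, 0 < Ψ h p t) ∧
      MemLp (Ψ h p) 2 (volume.restrict (Icc t0 tf)))
    (hstar : P → ℝ → ℝ) (Qstar : W → ℝ)
    (hfeas : Feasible t0 tf w hstar Qstar)
    (hedue : IsEDUE t0 tf w Ψ Θ hstar Qstar) :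
    ∀ (h : P → ℝ → ℝ) (Q : W → ℝ), Feasible t0 tf w h Q →
      0 ≤ (∑ p, ∫ t in Icc t0 tf, Ψ hstar p t * (h p t - hstar p t))
          - ∑ ij, Θ Qstar ij * (Q ij - Qstar ij) := by
  intro h Q hfeasQ
  have hcost p : MemLp (Ψ hstar p) 2 (volume.restrict (Icc t0 tf)) := (hΨ hstar hfeas.1 p).2.2
  have hdemand : ∑ ij, Θ Qstar ij * (Q ij - Qstar ij)
      = ∑ p, Θ Qstar (w p) * ((∫ t in Icc t0 tf, h p t) - ∫ t in Icc t0 tf, hstar p t) := by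
    simp only [mul_sub, Finset.sum_sub_distrib, hfeasQ.sum_mul_demand, hfeas.sum_mul_demand]
  rw [hdemand, sub_nonneg]
  refine Finset.sum_le_sum fun p _ => ?_
  exact const_mul_sub_integral_le_integral_mul_sub (hfeas.1 p).2.1 (hfeasQ.1 p).2.1
    (hedue p).1 (hedue p).2 (hfeasQ.1.integrable p) (hfeas.1.integrable_mul p (hcost p))
    (hfeasQ.1.integrable_mul p (hcost p))

/-- **Necessity part of Theorem 3.1**: an E-DUE solves the variational inequality
`VI(Ψ, Θ)`. -/
theorem edue_solves_vi {P W : Type*} [Fintype P] [Nonempty P] [Fintype W] [DecidableEq W]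
    (t0 tf : ℝ) (ht : t0 < tf) (w : P → W)
    (Ψ : (P → ℝ → ℝ) → P → ℝ → ℝ) (Θ : (W → ℝ) → W → ℝ)
    (hΨ : ∀ h : P → ℝ → ℝ, IsPathFlow t0 tf h → ∀ p,
      Measurable (Ψ h p) ∧ (∀ t ∈ Icc t0 tf, 0 < Ψ h p t) ∧
      MemLp (Ψ h p) 2 (volume.restrict (Icc t0 tf)))
    (hΘ : ∀ Q : W → ℝ, (∀ ij, 0 ≤ Q ij) → ∀ ij, 0 < Θ Q ij)
    (hstar : P → ℝ → ℝ) (Qstar : W → ℝ)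
    (hfeas : Feasible t0 tf w hstar Qstar)
    (hedue : IsEDUE t0 tf w Ψ Θ hstar Qstar) :
    ∀ (h : P → ℝ → ℝ) (Q : W → ℝ), Feasible t0 tf w h Q →
      0 ≤ (∑ p, ∫ t in Icc t0 tf, Ψ hstar p t * (h p t - hstar p t))
          - ∑ ij, Θ Qstar ij * (Q ij - Qstar ij) :=
  edue_solves_vi_general t0 tf w Ψ Θ hΨ hstar Qstar hfeas hedue
end

section
/- Suppose (h*, Q*) ∈ Λ̃ solves the variational inequality VI(Ψ, Θ). Then (h*, Q*) is a dynamic user equilibrium with elastic demand (E-DUE). (Sufficiency part of Theorem 3.1.) -/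
open MeasureTheory Set

/-!
With the costs frozen at the solution, the variational inequality is linear in `(h, Q)`.
Perturbing only path `p` by `δ`, and its OD demand by `∫ δ`, stays feasible as long as
`h*_p + δ ≥ 0`, and the inequality becomes `∫ (Ψ_p - Θ_{w p}) δ ≥ 0`. For `δ` the indicator
of `{Ψ_p < Θ_{w p}}` the integrand is `≤ 0`, hence zero a.e., which gives (ii). For `δ = -h*_p`
the integrand is `≤ 0` by (ii), hence zero a.e., which gives (i).
-/

lemma ae_eq_zero_of_nonpos_of_integral_nonneg {α : Type*} [MeasurableSpace α] {μ : Measure α}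
    {f : α → ℝ} (hf : Integrable f μ) (hnonpos : ∀ᵐ x ∂μ, f x ≤ 0) (hint : 0 ≤ ∫ x, f x ∂μ) :
    f =ᵐ[μ] 0 := by
  have hneg : 0 ≤ᵐ[μ] -f := by
    filter_upwards [hnonpos] with x hx
    simpa using hx
  have hzero : ∫ x, (-f) x ∂μ = 0 := by
    have := integral_nonpos_of_ae hnonpos
    simp only [Pi.neg_apply, integral_neg]
    linarith
  filter_upwards [(integral_eq_zero_iff_of_nonneg_ae hneg hf.neg).1 hzero] with x hx
  simpa using hx

lemma IsPathFlow.add_single {P : Type*} [DecidableEq P] {t0 tf : ℝ} {h : P → ℝ → ℝ}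
    (hh : IsPathFlow t0 tf h) (p : P) {δ : ℝ → ℝ} (hδm : Measurable δ)
    (hδ2 : MemLp δ 2 (volume.restrict (Icc t0 tf)))
    (hnonneg : ∀ᵐ t ∂(volume.restrict (Icc t0 tf)), 0 ≤ h p t + δ t) :
    IsPathFlow t0 tf (h + Pi.single p δ) := by
  intro q
  rcases eq_or_ne q p with rfl | hqp
  · simp only [Pi.add_apply, Pi.single_eq_same]
    exact ⟨(hh q).1.add hδm, hnonneg, (hh q).2.2.add hδ2⟩
  · simpa only [Pi.add_apply, Pi.single_eq_of_ne hqp, Pi.zero_apply, add_zero] using hh q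

lemma Feasible.add_single {P W : Type*} [Fintype P] [DecidableEq P] [DecidableEq W]
    {t0 tf : ℝ} {w : P → W} {h : P → ℝ → ℝ} {Q : W → ℝ} (hfeas : Feasible t0 tf w h Q)
    (p : P) {δ : ℝ → ℝ} (hδm : Measurable δ) (hδ2 : MemLp δ 2 (volume.restrict (Icc t0 tf)))
    (hnonneg : ∀ᵐ t ∂(volume.restrict (Icc t0 tf)), 0 ≤ h p t + δ t) :
    Feasible t0 tf w (h + Pi.single p δ) (Q + Pi.single (w p) (∫ t in Icc t0 tf, δ t)) := by
  have hflow := hfeas.1.add_single p hδm hδ2 hnonneg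
  have hintegral : ∀ q, ∫ t in Icc t0 tf, (h + Pi.single p δ : P → ℝ → ℝ) q t
      = (∫ t in Icc t0 tf, h q t) + (Pi.single p (∫ t in Icc t0 tf, δ t) : P → ℝ) q := by
    intro q
    rcases eq_or_ne q p with rfl | hqp
    · simp only [Pi.add_apply, Pi.single_eq_same]
      exact integral_add ((hfeas.1 q).2.2.integrable one_le_two) (hδ2.integrable one_le_two)
    · simp [Pi.single_eq_of_ne hqp]
  have hsum : ∀ ij, (∑ q ∈ Finset.univ.filter (fun q => w q = ij),
      ∫ t in Icc t0 tf, (h + Pi.single p δ : P → ℝ → ℝ) q t)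
        = (Q + Pi.single (w p) (∫ t in Icc t0 tf, δ t) : W → ℝ) ij := by
    intro ij
    rw [Finset.sum_congr rfl fun q _ => hintegral q, Finset.sum_add_distrib, (hfeas.2 ij).2,
      Finset.sum_pi_single']
    simp [Pi.single_apply, eq_comm]
  refine ⟨hflow, fun ij => ⟨?_, hsum ij⟩⟩
  rw [← hsum ij]
  exact Finset.sum_nonneg fun q _ => integral_nonneg_of_ae (hflow q).2.1

/-- `(h, Q) ∈ Λ̃` solves the variational inequality whose path costs `Ψ₀` and OD prices `Θ₀` are
frozen at their values at `(h, Q)`; this is `VI(Ψ, Θ)` with `Ψ₀ = Ψ(·, h)` and `Θ₀ = Θ[Q]`. -/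
def IsVISolution {P W : Type*} [Fintype P] [Fintype W] [DecidableEq W] (t0 tf : ℝ) (w : P → W)
    (Ψ₀ : P → ℝ → ℝ) (Θ₀ : W → ℝ) (h : P → ℝ → ℝ) (Q : W → ℝ) : Prop :=
  Feasible t0 tf w h Q ∧ ∀ (h' : P → ℝ → ℝ) (Q' : W → ℝ), Feasible t0 tf w h' Q' →
    0 ≤ (∑ q, ∫ t in Icc t0 tf, Ψ₀ q t * (h' q t - h q t)) - ∑ ij, Θ₀ ij * (Q' ij - Q ij)

namespace IsVISolution

variable {P W : Type*} [Fintype P] [DecidableEq P] [Fintype W] [DecidableEq W] {t0 tf : ℝ}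
  {w : P → W} {Ψ₀ : P → ℝ → ℝ} {Θ₀ : W → ℝ} {h : P → ℝ → ℝ} {Q : W → ℝ}

/-- Test the inequality against `(h + δ eₚ, Q + (∫ δ) e_{w p})`. -/
lemma integral_sub_mul_nonneg (hsol : IsVISolution t0 tf w Ψ₀ Θ₀ h Q) (p : P)
    (hΨ₀ : MemLp (Ψ₀ p) 2 (volume.restrict (Icc t0 tf))) {δ : ℝ → ℝ}
    (hδm : Measurable δ) (hδ2 : MemLp δ 2 (volume.restrict (Icc t0 tf)))
    (hnonneg : ∀ᵐ t ∂(volume.restrict (Icc t0 tf)), 0 ≤ h p t + δ t) :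
    0 ≤ ∫ t in Icc t0 tf, (Ψ₀ p t - Θ₀ (w p)) * δ t := by
  have hcost : ∑ q, ∫ t in Icc t0 tf, Ψ₀ q t * ((h + Pi.single p δ : P → ℝ → ℝ) q t - h q t)
      = ∫ t in Icc t0 tf, Ψ₀ p t * δ t := by
    simp only [Pi.add_apply, add_sub_cancel_left]
    rw [Finset.sum_congr rfl fun q _ => Pi.apply_single
      (fun q (g : ℝ → ℝ) => ∫ t in Icc t0 tf, Ψ₀ q t * g t) (fun _ => by simp) p δ q,
      Finset.sum_pi_single', if_pos (Finset.mem_univ p)]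
  have hdemand : ∑ ij, Θ₀ ij * ((Q + Pi.single (w p) (∫ t in Icc t0 tf, δ t) : W → ℝ) ij - Q ij)
      = Θ₀ (w p) * ∫ t in Icc t0 tf, δ t := by
    simp only [Pi.add_apply, add_sub_cancel_left]
    rw [Finset.sum_congr rfl fun ij _ => Pi.apply_single (fun ij a => Θ₀ ij * a)
      (fun _ => mul_zero _) (w p) _ ij, Finset.sum_pi_single', if_pos (Finset.mem_univ _)]
  have key := hsol.2 _ _ (hsol.1.add_single p hδm hδ2 hnonneg)
  rw [hcost, hdemand] at key
  have hΨδ : Integrable (fun t => Ψ₀ p t * δ t) (volume.restrict (Icc t0 tf)) :=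
    hΨ₀.integrable_mul hδ2
  simp_rw [sub_mul]
  rwa [integral_sub hΨδ ((hδ2.integrable one_le_two).const_mul _), integral_const_mul]

lemma ae_sub_mul_eq_zero (hsol : IsVISolution t0 tf w Ψ₀ Θ₀ h Q) (p : P)
    (hΨ₀ : MemLp (Ψ₀ p) 2 (volume.restrict (Icc t0 tf))) {δ : ℝ → ℝ}
    (hδm : Measurable δ) (hδ2 : MemLp δ 2 (volume.restrict (Icc t0 tf)))
    (hnonneg : ∀ᵐ t ∂(volume.restrict (Icc t0 tf)), 0 ≤ h p t + δ t)
    (hnonpos : ∀ᵐ t ∂(volume.restrict (Icc t0 tf)), (Ψ₀ p t - Θ₀ (w p)) * δ t ≤ 0) :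
    ∀ᵐ t ∂(volume.restrict (Icc t0 tf)), (Ψ₀ p t - Θ₀ (w p)) * δ t = 0 :=
  ae_eq_zero_of_nonpos_of_integral_nonneg ((hΨ₀.sub (memLp_const _)).integrable_mul hδ2)
    hnonpos (hsol.integral_sub_mul_nonneg p hΨ₀ hδm hδ2 hnonneg)

lemma ae_price_le (hsol : IsVISolution t0 tf w Ψ₀ Θ₀ h Q) (p : P) (hΨm : Measurable (Ψ₀ p))
    (hΨ₀ : MemLp (Ψ₀ p) 2 (volume.restrict (Icc t0 tf))) :
    ∀ᵐ t ∂(volume.restrict (Icc t0 tf)), Θ₀ (w p) ≤ Ψ₀ p t := by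
  set A := {t | Ψ₀ p t < Θ₀ (w p)}
  have hA : MeasurableSet A := measurableSet_lt hΨm measurable_const
  have hzero := hsol.ae_sub_mul_eq_zero p hΨ₀ (δ := A.indicator 1)
    (measurable_const.indicator hA) ((memLp_const 1).indicator hA)
    (by
      filter_upwards [(hsol.1.1 p).2.1] with t ht
      exact add_nonneg ht (indicator_nonneg (fun _ _ => zero_le_one) t))
    (ae_of_all _ fun t => by
      by_cases htA : t ∈ A
      · simpa [htA] using le_of_lt htA
      · simp [htA])
  filter_upwards [hzero] with t ht
  by_contra! htA
  simp [indicator_of_mem (show t ∈ A from htA), sub_eq_zero, htA.ne] at ht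

lemma ae_cost_eq_price_of_pos (hsol : IsVISolution t0 tf w Ψ₀ Θ₀ h Q) (p : P)
    (hΨm : Measurable (Ψ₀ p)) (hΨ₀ : MemLp (Ψ₀ p) 2 (volume.restrict (Icc t0 tf))) :
    ∀ᵐ t ∂(volume.restrict (Icc t0 tf)), 0 < h p t → Ψ₀ p t = Θ₀ (w p) := by
  obtain ⟨hm, hh_nonneg, hh2⟩ := hsol.1.1 p
  have hzero := hsol.ae_sub_mul_eq_zero p hΨ₀ (δ := -h p) hm.neg hh2.neg
    (ae_of_all _ fun t => by simp)
    (by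
      filter_upwards [hsol.ae_price_le p hΨm hΨ₀, hh_nonneg] with t hle ht
      exact mul_nonpos_of_nonneg_of_nonpos (sub_nonneg.2 hle) (neg_nonpos.2 ht))
  filter_upwards [hzero] with t ht hpos
  simpa [sub_eq_zero, hpos.ne'] using ht

end IsVISolution

theorem vi_solution_is_edue_general {P W : Type*} [Fintype P] [Fintype W] [DecidableEq W]
    (t0 tf : ℝ) (w : P → W)
    (Ψ : (P → ℝ → ℝ) → P → ℝ → ℝ) (Θ : (W → ℝ) → W → ℝ)
    (hΨ : ∀ h : P → ℝ → ℝ, IsPathFlow t0 tf h → ∀ p,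
      Measurable (Ψ h p) ∧ (∀ t ∈ Icc t0 tf, 0 < Ψ h p t) ∧
      MemLp (Ψ h p) 2 (volume.restrict (Icc t0 tf)))
    (hstar : P → ℝ → ℝ) (Qstar : W → ℝ)
    (hfeas : Feasible t0 tf w hstar Qstar)
    (hvi : ∀ (h : P → ℝ → ℝ) (Q : W → ℝ), Feasible t0 tf w h Q →
      0 ≤ (∑ p, ∫ t in Icc t0 tf, Ψ hstar p t * (h p t - hstar p t))
          - ∑ ij, Θ Qstar ij * (Q ij - Qstar ij)) :
    IsEDUE t0 tf w Ψ Θ hstar Qstar := by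
  classical
  have hsol : IsVISolution t0 tf w (Ψ hstar) (Θ Qstar) hstar Qstar := ⟨hfeas, hvi⟩
  intro p
  obtain ⟨hΨm, -, hΨ2⟩ := hΨ hstar hfeas.1 p
  exact ⟨hsol.ae_cost_eq_price_of_pos p hΨm hΨ2, hsol.ae_price_le p hΨm hΨ2⟩

/-- **Sufficiency part of Theorem 3.1**: a solution of the variational inequality
`VI(Ψ, Θ)` is an E-DUE. -/
theorem vi_solution_is_edue {P W : Type*} [Fintype P] [Nonempty P] [Fintype W] [DecidableEq W]
    (t0 tf : ℝ) (ht : t0 < tf) (w : P → W)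
    (Ψ : (P → ℝ → ℝ) → P → ℝ → ℝ) (Θ : (W → ℝ) → W → ℝ)
    (hΨ : ∀ h : P → ℝ → ℝ, IsPathFlow t0 tf h → ∀ p,
      Measurable (Ψ h p) ∧ (∀ t ∈ Icc t0 tf, 0 < Ψ h p t) ∧
      MemLp (Ψ h p) 2 (volume.restrict (Icc t0 tf)))
    (hΘ : ∀ Q : W → ℝ, (∀ ij, 0 ≤ Q ij) → ∀ ij, 0 < Θ Q ij)
    (hstar : P → ℝ → ℝ) (Qstar : W → ℝ)
    (hfeas : Feasible t0 tf w hstar Qstar)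
    (hvi : ∀ (h : P → ℝ → ℝ) (Q : W → ℝ), Feasible t0 tf w h Q →
      0 ≤ (∑ p, ∫ t in Icc t0 tf, Ψ hstar p t * (h p t - hstar p t))
          - ∑ ij, Θ Qstar ij * (Q ij - Qstar ij)) :
    IsEDUE t0 tf w Ψ Θ hstar Qstar :=
  vi_solution_is_edue_general t0 tf w Ψ Θ hΨ hstar Qstar hfeas hvi
end

section
/- Suppose (h*, Q*) ∈ Λ̃ solves the variational inequality VI(Ψ, Θ). Then for every ij ∈ W, ∑_{p : w(p)=ij} ∫_{t0}^{tf} Ψ_p(t, h*) h*_p(t) dt = Θ_ij[Q*] · Q*_ij. (Consequence of testing the VI against the scaled flows ĥ_p = a·h*_p for p with w(p)=ij, Q̂_ij = a·Q*_ij, for all a > 0, as in the sufficiency proof of Theorem 3.1.) -/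
open MeasureTheory Set

/-!
Scaling the equilibrium flow of a single OD pair `ij` by a factor `a ≥ 0` (and its demand
by the same factor) stays feasible, and the variational inequality then reads
`0 ≤ (a - 1) * (C_ij - Θ_ij[Q*] Q*_ij)`, where `C_ij` is the total cost experienced on `ij`.
Taking `a = 0` and `a = 2` forces the second factor to vanish.
-/

section

variable {P W : Type*} {t0 tf : ℝ}

theorem IsPathFlow.const_mul {h : P → ℝ → ℝ} {c : P → ℝ} (hc : ∀ p, 0 ≤ c p)
    (hh : IsPathFlow t0 tf h) : IsPathFlow t0 tf (fun p t => c p * h p t) := fun p =>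
  let ⟨hmeas, hnonneg, hmem⟩ := hh p
  ⟨hmeas.const_mul _, hnonneg.mono fun _ ht => mul_nonneg (hc p) ht, hmem.const_mul _⟩

variable [Fintype P] [DecidableEq W] {w : P → W}

theorem Feasible.scale_od {h : P → ℝ → ℝ} {Q c : W → ℝ} (hc : ∀ ij, 0 ≤ c ij)
    (hf : Feasible t0 tf w h Q) :
    Feasible t0 tf w (fun p t => c (w p) * h p t) (fun ij => c ij * Q ij) := by
  refine ⟨hf.1.const_mul fun p => hc (w p), fun ij => ⟨mul_nonneg (hc ij) (hf.2 ij).1, ?_⟩⟩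
  calc ∑ p ∈ Finset.univ.filter (fun p => w p = ij), ∫ t in Icc t0 tf, c (w p) * h p t
      = ∑ p ∈ Finset.univ.filter (fun p => w p = ij), c ij * ∫ t in Icc t0 tf, h p t := by
        refine Finset.sum_congr rfl fun p hp => ?_
        rw [(Finset.mem_filter.1 hp).2, integral_const_mul]
    _ = c ij * Q ij := by rw [← Finset.mul_sum, (hf.2 ij).2]

variable [Fintype W]

theorem sum_integral_mul_scale_od_sub (Ψ h : P → ℝ → ℝ) (c : W → ℝ) :
    ∑ p, ∫ t in Icc t0 tf, Ψ p t * (c (w p) * h p t - h p t)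
      = ∑ ij, (c ij - 1) * ∑ p ∈ Finset.univ.filter (fun p => w p = ij),
          ∫ t in Icc t0 tf, Ψ p t * h p t := by
  rw [← Finset.sum_fiberwise Finset.univ w]
  refine Finset.sum_congr rfl fun ij _ => ?_
  rw [Finset.mul_sum]
  refine Finset.sum_congr rfl fun p hp => ?_
  rw [(Finset.mem_filter.1 hp).2, ← integral_const_mul]
  congr 1 with t
  ring

theorem vi_gap_scale_od_nonneg {Ψ : P → ℝ → ℝ} {θ : W → ℝ} {hstar : P → ℝ → ℝ}
    {Qstar : W → ℝ} (hfeas : Feasible t0 tf w hstar Qstar)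
    (hvi : ∀ (h : P → ℝ → ℝ) (Q : W → ℝ), Feasible t0 tf w h Q →
      0 ≤ (∑ p, ∫ t in Icc t0 tf, Ψ p t * (h p t - hstar p t))
          - ∑ ij, θ ij * (Q ij - Qstar ij))
    {c : W → ℝ} (hc : ∀ ij, 0 ≤ c ij) :
    0 ≤ ∑ ij, (c ij - 1) * ((∑ p ∈ Finset.univ.filter (fun p => w p = ij),
        ∫ t in Icc t0 tf, Ψ p t * hstar p t) - θ ij * Qstar ij) := by
  have := hvi _ _ (hfeas.scale_od hc)
  rw [sum_integral_mul_scale_od_sub, ← Finset.sum_sub_distrib] at this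
  convert this using 2 with ij
  ring

theorem sum_update_one_sub_one_mul (x : W → ℝ) (ij : W) (a : ℝ) :
    ∑ k, (Function.update (1 : W → ℝ) ij a k - 1) * x k = (a - 1) * x ij := by
  rw [Finset.sum_eq_single ij (fun k _ hk => by simp [hk]) (by simp)]
  simp

end

theorem vi_solution_cost_identity_general {P W : Type*} [Fintype P] [Fintype W]
    [DecidableEq W]
    (t0 tf : ℝ) (w : P → W)
    (Ψ : (P → ℝ → ℝ) → P → ℝ → ℝ) (Θ : (W → ℝ) → W → ℝ)
    (hstar : P → ℝ → ℝ) (Qstar : W → ℝ)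
    (hfeas : Feasible t0 tf w hstar Qstar)
    (hvi : ∀ (h : P → ℝ → ℝ) (Q : W → ℝ), Feasible t0 tf w h Q →
      0 ≤ (∑ p, ∫ t in Icc t0 tf, Ψ hstar p t * (h p t - hstar p t))
          - ∑ ij, Θ Qstar ij * (Q ij - Qstar ij)) :
    ∀ ij, (∑ p ∈ Finset.univ.filter (fun p => w p = ij),
        ∫ t in Icc t0 tf, Ψ hstar p t * hstar p t) = Θ Qstar ij * Qstar ij := by
  intro ij
  have gap (a : ℝ) (ha : 0 ≤ a) := sum_update_one_sub_one_mul _ ij a ▸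
    vi_gap_scale_od_nonneg hfeas hvi (c := Function.update (1 : W → ℝ) ij a)
      (fun k => by rcases eq_or_ne k ij with rfl | hk <;> simp [*])
  linarith [gap 0 le_rfl, gap 2 zero_le_two]

/-- **Scaling consequence in the sufficiency proof of Theorem 3.1**: a solution of
`VI(Ψ, Θ)` satisfies, for each OD pair, equality of total experienced cost and
`Θ_ij[Q*] · Q*_ij`. -/
theorem vi_solution_cost_identity {P W : Type*} [Fintype P] [Nonempty P] [Fintype W]
    [DecidableEq W]
    (t0 tf : ℝ) (ht : t0 < tf) (w : P → W)
    (Ψ : (P → ℝ → ℝ) → P → ℝ → ℝ) (Θ : (W → ℝ) → W → ℝ)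
    (hΨ : ∀ h : P → ℝ → ℝ, IsPathFlow t0 tf h → ∀ p,
      Measurable (Ψ h p) ∧ (∀ t ∈ Icc t0 tf, 0 < Ψ h p t) ∧
      MemLp (Ψ h p) 2 (volume.restrict (Icc t0 tf)))
    (hΘ : ∀ Q : W → ℝ, (∀ ij, 0 ≤ Q ij) → ∀ ij, 0 < Θ Q ij)
    (hstar : P → ℝ → ℝ) (Qstar : W → ℝ)
    (hfeas : Feasible t0 tf w hstar Qstar)
    (hvi : ∀ (h : P → ℝ → ℝ) (Q : W → ℝ), Feasible t0 tf w h Q →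
      0 ≤ (∑ p, ∫ t in Icc t0 tf, Ψ hstar p t * (h p t - hstar p t))
          - ∑ ij, Θ Qstar ij * (Q ij - Qstar ij)) :
    ∀ ij, (∑ p ∈ Finset.univ.filter (fun p => w p = ij),
        ∫ t in Icc t0 tf, Ψ hstar p t * hstar p t) = Θ Qstar ij * Qstar ij :=
  vi_solution_cost_identity_general t0 tf w Ψ Θ hstar Qstar hfeas hvi
end

section
/- For a path-flow vector h define y_ij(t_f; h) = ∑_{p : w(p)=ij} ∫_{t0}^{tf} h_p(t) dt for each ij ∈ W. Then a path-flow vector h* is a dynamic user equilibrium with elastic demand with associated demands Q*_ij = y_ij(t_f; h*) if and only if for every path-flow vector h: ∑_{p∈P} ∫_{t0}^{tf} Ψ_p(t, h*)(h_p(t) − h*_p(t)) dt − ∑_{ij∈W} Θ_ij[y(t_f; h*)] (y_ij(t_f; h) − y_ij(t_f; h*)) ≥ 0. (Theorem 4.1: differential variational inequality formulation of E-DUE.) -/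
/-!
Subtracting `∑ ij, Θ_ij (y_ij(h) - y_ij(h*))` path by path turns the DVI functional into
`∑ p, ∫ (Ψ_p(h*) - Θ_{w p}) (h_p - h*_p)`, a sum of independent terms, one per path, each
vanishing at `h = h*`. The DVI therefore splits into one variational inequality per path over
the cone of nonnegative `L²` functions. Testing with `h*_p + 𝟙_s` gives `Ψ_p ≥ Θ` a.e., and
testing with `0` gives `∫ (Ψ_p - Θ) h*_p ≤ 0` for an a.e. nonnegative integrand, which forces
complementarity; conversely both E-DUE conditions make each integrand a.e. nonnegative.
-/

open MeasureTheory Set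

/-- Terminal value of the cumulative-departure state: `y_ij(t_f; h)`. -/
noncomputable def yTf {P W : Type*} [Fintype P] [DecidableEq W] (t0 tf : ℝ) (w : P → W)
    (h : P → ℝ → ℝ) (ij : W) : ℝ :=
  ∑ p ∈ Finset.univ.filter (fun p => w p = ij), ∫ t in Icc t0 tf, h p t

open Finset

section NonnegL2

variable {α : Type*} [MeasurableSpace α] {μ : Measure α}

def nonnegL2 (μ : Measure α) : Set (α → ℝ) :=
  {y | Measurable y ∧ (∀ᵐ t ∂μ, 0 ≤ y t) ∧ MemLp y 2 μ}

lemma zero_mem_nonnegL2 : (0 : α → ℝ) ∈ nonnegL2 μ :=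
  ⟨measurable_const, ae_of_all _ fun _ => le_rfl, MemLp.zero⟩

lemma add_indicator_one_mem_nonnegL2 [IsFiniteMeasure μ] {x : α → ℝ} (hx : x ∈ nonnegL2 μ)
    {s : Set α} (hs : MeasurableSet s) : x + s.indicator 1 ∈ nonnegL2 μ := by
  obtain ⟨hxm, hx0, hx2⟩ := hx
  refine ⟨hxm.add (measurable_const.indicator hs), ?_, hx2.add ((memLp_const 1).indicator hs)⟩
  filter_upwards [hx0] with t ht
  exact add_nonneg ht (indicator_nonneg (fun _ _ => zero_le_one) t)

variable {φ x : α → ℝ}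

lemma ae_nonneg_of_forall_integral_mul_sub_nonneg [IsFiniteMeasure μ] (hφ : Integrable φ μ)
    (hx : x ∈ nonnegL2 μ) (hvi : ∀ y ∈ nonnegL2 μ, 0 ≤ ∫ t, φ t * (y t - x t) ∂μ) :
    ∀ᵐ t ∂μ, 0 ≤ φ t := by
  refine ae_nonneg_of_forall_setIntegral_nonneg hφ fun s hs _ => ?_
  have htest := hvi _ (add_indicator_one_mem_nonnegL2 hx hs)
  rw [← integral_indicator hs]
  refine htest.trans_eq (integral_congr_ae (ae_of_all _ fun t => ?_))
  by_cases hts : t ∈ s <;> simp [hts]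

lemma ae_eq_zero_of_pos_of_forall_integral_mul_sub_nonneg (hφx : Integrable (φ * x) μ)
    (hφ : ∀ᵐ t ∂μ, 0 ≤ φ t) (hx : x ∈ nonnegL2 μ)
    (hvi : ∀ y ∈ nonnegL2 μ, 0 ≤ ∫ t, φ t * (y t - x t) ∂μ) :
    ∀ᵐ t ∂μ, 0 < x t → φ t = 0 := by
  have hnonneg : 0 ≤ᵐ[μ] φ * x := by
    filter_upwards [hφ, hx.2.1] with t hφt hxt
    exact mul_nonneg hφt hxt
  have hle : ∫ t, (φ * x) t ∂μ ≤ 0 := by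
    have htest := hvi 0 zero_mem_nonnegL2
    simp only [Pi.zero_apply, zero_sub, mul_neg, integral_neg, neg_nonneg] at htest
    exact htest
  have hzero : φ * x =ᵐ[μ] 0 := (integral_eq_zero_iff_of_nonneg_ae hnonneg hφx).1
    (le_antisymm hle (integral_nonneg_of_ae hnonneg))
  filter_upwards [hzero] with t ht hxt
  exact (mul_eq_zero.1 ht).resolve_right hxt.ne'

lemma integral_mul_sub_nonneg_of_complementary (hx : ∀ᵐ t ∂μ, 0 ≤ x t)
    (hcompl : ∀ᵐ t ∂μ, 0 < x t → φ t = 0) (hφ : ∀ᵐ t ∂μ, 0 ≤ φ t) {y : α → ℝ}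
    (hy : ∀ᵐ t ∂μ, 0 ≤ y t) : 0 ≤ ∫ t, φ t * (y t - x t) ∂μ := by
  refine integral_nonneg_of_ae ?_
  filter_upwards [hx, hcompl, hφ, hy] with t hxt hct hφt hyt
  rcases hxt.eq_or_lt with hx0 | hxpos
  · rw [← hx0, sub_zero]
    exact mul_nonneg hφt hyt
  · simp [hct hxpos]

theorem forall_integral_mul_sub_nonneg_iff [IsFiniteMeasure μ] (hφ : MemLp φ 2 μ)
    (hx : x ∈ nonnegL2 μ) :
    (∀ y ∈ nonnegL2 μ, 0 ≤ ∫ t, φ t * (y t - x t) ∂μ) ↔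
      (∀ᵐ t ∂μ, 0 < x t → φ t = 0) ∧ ∀ᵐ t ∂μ, 0 ≤ φ t := by
  refine ⟨fun hvi => ?_, fun ⟨hcompl, hnonneg⟩ y hy =>
    integral_mul_sub_nonneg_of_complementary hx.2.1 hcompl hnonneg hy.2.1⟩
  have hnonneg := ae_nonneg_of_forall_integral_mul_sub_nonneg (hφ.integrable one_le_two) hx hvi
  exact ⟨ae_eq_zero_of_pos_of_forall_integral_mul_sub_nonneg (hφ.integrable_mul hx.2.2)
    hnonneg hx hvi, hnonneg⟩

end NonnegL2

lemma forall_sum_nonneg_iff_forall_nonneg {ι β : Type*} [Fintype ι] [DecidableEq ι]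
    {S : ι → Set β} {x : ι → β} (hx : ∀ i, x i ∈ S i) {F : ι → β → ℝ}
    (hF : ∀ i, F i (x i) = 0) :
    (∀ y : ι → β, (∀ i, y i ∈ S i) → 0 ≤ ∑ i, F i (y i)) ↔ ∀ i, ∀ z ∈ S i, 0 ≤ F i z := by
  refine ⟨fun hsum i z hz => ?_, fun h y hy => sum_nonneg fun i _ => h i (y i) (hy i)⟩
  have hupd : ∀ j, Function.update x i z j ∈ S j := fun j => by
    rcases eq_or_ne j i with rfl | hji
    · simpa using hz
    · simpa [hji] using hx j
  have := hsum _ hupd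
  rwa [sum_eq_single i (fun j _ hji => by simp [hji, hF]) (by simp), Function.update_self] at this

section PathFlow

variable {P W : Type*} [Fintype P] [Fintype W] [DecidableEq W] {t0 tf : ℝ}

lemma sum_mul_yTf_sub (w : P → W) (c : W → ℝ) {h h' : P → ℝ → ℝ}
    (hh : IsPathFlow t0 tf h) (hh' : IsPathFlow t0 tf h') :
    ∑ ij, c ij * (yTf t0 tf w h ij - yTf t0 tf w h' ij) =
      ∑ p, c (w p) * ∫ t in Icc t0 tf, (h p t - h' p t) := by
  rw [← sum_fiberwise univ w]
  refine sum_congr rfl fun ij _ => ?_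
  rw [yTf, yTf, ← sum_sub_distrib, mul_sum]
  refine sum_congr rfl fun p hp => ?_
  rw [(mem_filter.1 hp).2, integral_sub ((hh p).2.2.integrable one_le_two)
    ((hh' p).2.2.integrable one_le_two)]

lemma sum_integral_sub_sum_mul_yTf_sub (w : P → W) (ψ : P → ℝ → ℝ) (c : W → ℝ)
    (hψ : ∀ p, MemLp (ψ p) 2 (volume.restrict (Icc t0 tf))) {h h' : P → ℝ → ℝ}
    (hh : IsPathFlow t0 tf h) (hh' : IsPathFlow t0 tf h') :
    (∑ p, ∫ t in Icc t0 tf, ψ p t * (h p t - h' p t))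
        - ∑ ij, c ij * (yTf t0 tf w h ij - yTf t0 tf w h' ij) =
      ∑ p, ∫ t in Icc t0 tf, (ψ p t - c (w p)) * (h p t - h' p t) := by
  rw [sum_mul_yTf_sub w c hh hh', ← sum_sub_distrib]
  refine sum_congr rfl fun p _ => ?_
  have hdiff := (hh p).2.2.sub (hh' p).2.2
  have hprod : Integrable (fun t => ψ p t * (h p t - h' p t)) (volume.restrict (Icc t0 tf)) :=
    (hψ p).integrable_mul hdiff
  have hd : Integrable (fun t => h p t - h' p t) (volume.restrict (Icc t0 tf)) :=
    hdiff.integrable one_le_two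
  simp only [sub_mul]
  rw [integral_sub hprod (hd.const_mul (c (w p))), integral_const_mul]

end PathFlow

theorem edue_iff_dvi_general {P W : Type*} [Fintype P] [Fintype W] [DecidableEq W]
    (t0 tf : ℝ) (w : P → W)
    (Ψ : (P → ℝ → ℝ) → P → ℝ → ℝ) (Θ : (W → ℝ) → W → ℝ)
    (hΨ : ∀ h : P → ℝ → ℝ, IsPathFlow t0 tf h → ∀ p,
      Measurable (Ψ h p) ∧ (∀ t ∈ Icc t0 tf, 0 < Ψ h p t) ∧
      MemLp (Ψ h p) 2 (volume.restrict (Icc t0 tf)))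
    (hstar : P → ℝ → ℝ) (hflow : IsPathFlow t0 tf hstar) :
    IsEDUE t0 tf w Ψ Θ hstar (yTf t0 tf w hstar) ↔
      ∀ h : P → ℝ → ℝ, IsPathFlow t0 tf h →
        0 ≤ (∑ p, ∫ t in Icc t0 tf, Ψ hstar p t * (h p t - hstar p t))
            - ∑ ij, Θ (yTf t0 tf w hstar) ij *
                (yTf t0 tf w h ij - yTf t0 tf w hstar ij) := by
  classical
  have hΨL2 := fun p => (hΨ hstar hflow p).2.2
  set φ : P → ℝ → ℝ := fun p t => Ψ hstar p t - Θ (yTf t0 tf w hstar) (w p)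
  calc IsEDUE t0 tf w Ψ Θ hstar (yTf t0 tf w hstar)
      ↔ ∀ p, (∀ᵐ t ∂volume.restrict (Icc t0 tf), 0 < hstar p t → φ p t = 0) ∧
          ∀ᵐ t ∂volume.restrict (Icc t0 tf), 0 ≤ φ p t := by
        simp only [IsEDUE, φ, sub_eq_zero, sub_nonneg]
    _ ↔ ∀ p, ∀ y ∈ nonnegL2 (volume.restrict (Icc t0 tf)),
          0 ≤ ∫ t in Icc t0 tf, φ p t * (y t - hstar p t) :=
        forall_congr' fun p =>
          (forall_integral_mul_sub_nonneg_iff ((hΨL2 p).sub (memLp_const _)) (hflow p)).symm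
    -- `IsPathFlow t0 tf h` unfolds to `∀ p, h p ∈ nonnegL2 (volume.restrict (Icc t0 tf))`.
    _ ↔ ∀ h : P → ℝ → ℝ, IsPathFlow t0 tf h →
          0 ≤ ∑ p, ∫ t in Icc t0 tf, φ p t * (h p t - hstar p t) :=
        (forall_sum_nonneg_iff_forall_nonneg (S := fun _ => nonnegL2 _) hflow
          (F := fun p y => ∫ t in Icc t0 tf, φ p t * (y t - hstar p t)) (fun p => by simp)).symm
    _ ↔ _ := forall₂_congr fun h hh => by
        rw [sum_integral_sub_sum_mul_yTf_sub w _ _ hΨL2 hh hflow]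

/-- **Theorem 4.1 (E-DUE equivalent to a differential variational inequality)**:
`h*` is an E-DUE with associated demands `Q*_ij = y_ij(t_f; h*)` if and only if it
solves `DVI(Ψ, Θ, t0, tf)`. -/
theorem edue_iff_dvi {P W : Type*} [Fintype P] [Nonempty P] [Fintype W] [DecidableEq W]
    (t0 tf : ℝ) (ht : t0 < tf) (w : P → W)
    (Ψ : (P → ℝ → ℝ) → P → ℝ → ℝ) (Θ : (W → ℝ) → W → ℝ)
    (hΨ : ∀ h : P → ℝ → ℝ, IsPathFlow t0 tf h → ∀ p,
      Measurable (Ψ h p) ∧ (∀ t ∈ Icc t0 tf, 0 < Ψ h p t) ∧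
      MemLp (Ψ h p) 2 (volume.restrict (Icc t0 tf)))
    (hΘ : ∀ Q : W → ℝ, (∀ ij, 0 ≤ Q ij) → ∀ ij, 0 < Θ Q ij)
    (hstar : P → ℝ → ℝ) (hflow : IsPathFlow t0 tf hstar) :
    IsEDUE t0 tf w Ψ Θ hstar (yTf t0 tf w hstar) ↔
      ∀ h : P → ℝ → ℝ, IsPathFlow t0 tf h →
        0 ≤ (∑ p, ∫ t in Icc t0 tf, Ψ hstar p t * (h p t - hstar p t))
            - ∑ ij, Θ (yTf t0 tf w hstar) ij *
                (yTf t0 tf w h ij - yTf t0 tf w hstar ij) :=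
  edue_iff_dvi_general t0 tf w Ψ Θ hΨ hstar hflow
end

section
/- Let δ > 0 and let I' = [a − δ, a] and I = [a, a + δ] be adjacent intervals. Let Ψ be a continuous real-valued function on I' ∪ I, let t* ∈ I' satisfy Ψ(t*) ≥ Ψ(s) for all s ∈ I', and let c > 3 be such that Ψ(t) − Ψ(t*) ≥ c (t − a) − (t − t*) for all t ∈ I. Then ∫_I Ψ(t) dt ≥ δ Ψ(t*) + (δ²/2)(c − 3) > δ Ψ(t*) ≥ ∫_{I'} Ψ(t) dt; in particular ∫_I Ψ(t) dt > ∫_{I'} Ψ(t) dt. (Integral comparison step (34) in the proof of Lemma A.2.) -/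
open MeasureTheory Set

theorem setIntegral_Icc_le_of_le_const {f : ℝ → ℝ} {a b M : ℝ} (hab : a ≤ b)
    (hf : IntegrableOn f (Icc a b)) (hM : ∀ x ∈ Icc a b, f x ≤ M) :
    ∫ x in Icc a b, f x ≤ (b - a) * M :=
  calc ∫ x in Icc a b, f x
      ≤ ∫ _ in Icc a b, M :=
        setIntegral_mono_on hf (integrableOn_const (by simp)) measurableSet_Icc hM
    _ = (b - a) * M := by
        rw [setIntegral_const, Real.volume_real_Icc_of_le hab, smul_eq_mul]

theorem setIntegral_Icc_affine {a b : ℝ} (hab : a ≤ b) (p q : ℝ) :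
    ∫ t in Icc a b, (p + q * (t - a)) = (b - a) * p + q * (b - a) ^ 2 / 2 := by
  rw [integral_Icc_eq_integral_Ioc, ← intervalIntegral.integral_of_le hab,
    intervalIntegral.integral_add intervalIntegrable_const
      ((by fun_prop : Continuous fun t => q * (t - a)).intervalIntegrable a b),
    intervalIntegral.integral_const_mul, intervalIntegral.integral_comp_sub_right (fun t => t),
    integral_id, intervalIntegral.integral_const, smul_eq_mul]
  ring

theorem le_setIntegral_Icc_of_affine_le {f : ℝ → ℝ} {a b p q : ℝ} (hab : a ≤ b)
    (hf : IntegrableOn f (Icc a b)) (hpq : ∀ t ∈ Icc a b, p + q * (t - a) ≤ f t) :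
    (b - a) * p + q * (b - a) ^ 2 / 2 ≤ ∫ t in Icc a b, f t := by
  rw [← setIntegral_Icc_affine hab]
  exact setIntegral_mono_on (by fun_prop : Continuous fun t => p + q * (t - a)).integrableOn_Icc
    hf measurableSet_Icc hpq

/-- **Integral comparison step (34) in the proof of Lemma A.2**: on adjacent
intervals `I' = [a − δ, a]` and `I = [a, a + δ]`, if `t* ∈ I'` maximizes the
continuous function `Ψ` over `I'` and `Ψ(t) − Ψ(t*) ≥ c(t − a) − (t − t*)` on `I`
with `c > 3`, then
`∫_I Ψ ≥ δ Ψ(t*) + (δ²/2)(c − 3) > δ Ψ(t*) ≥ ∫_{I'} Ψ`; in particular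
`∫_I Ψ > ∫_{I'} Ψ`. -/
theorem adjacent_interval_integral_comparison
    (a δ : ℝ) (hδ : 0 < δ)
    (Ψ : ℝ → ℝ) (hcont : ContinuousOn Ψ (Icc (a - δ) (a + δ)))
    (tstar : ℝ) (hts : tstar ∈ Icc (a - δ) a)
    (hmax : ∀ s ∈ Icc (a - δ) a, Ψ s ≤ Ψ tstar)
    (c : ℝ) (hc : 3 < c)
    (hlow : ∀ t ∈ Icc a (a + δ), c * (t - a) - (t - tstar) ≤ Ψ t - Ψ tstar) :
    (δ * Ψ tstar + δ ^ 2 / 2 * (c - 3) ≤ ∫ t in Icc a (a + δ), Ψ t) ∧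
    (δ * Ψ tstar < δ * Ψ tstar + δ ^ 2 / 2 * (c - 3)) ∧
    ((∫ t in Icc (a - δ) a, Ψ t) ≤ δ * Ψ tstar) ∧
    ((∫ t in Icc (a - δ) a, Ψ t) < ∫ t in Icc a (a + δ), Ψ t) := by
  have hright : IntegrableOn Ψ (Icc a (a + δ)) :=
    (hcont.mono (Icc_subset_Icc (by linarith) le_rfl)).integrableOn_Icc
  have hleft : IntegrableOn Ψ (Icc (a - δ) a) :=
    (hcont.mono (Icc_subset_Icc le_rfl (by linarith))).integrableOn_Icc
  -- `t - tstar ≤ (t - a) + δ` turns the hypothesis into an affine minorant of slope `c - 1`.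
  have haffine : ∀ t ∈ Icc a (a + δ), (Ψ tstar - δ) + (c - 1) * (t - a) ≤ Ψ t :=
    fun t ht => by linarith [hlow t ht, hts.1]
  have h1 : δ * Ψ tstar + δ ^ 2 / 2 * (c - 3) ≤ ∫ t in Icc a (a + δ), Ψ t := by
    have := le_setIntegral_Icc_of_affine_le (by linarith) hright haffine
    rw [add_sub_cancel_left] at this
    linarith
  have h2 : δ * Ψ tstar < δ * Ψ tstar + δ ^ 2 / 2 * (c - 3) := by
    have : 0 < δ ^ 2 / 2 * (c - 3) := by have := sub_pos.2 hc; positivity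
    linarith
  have h3 : ∫ t in Icc (a - δ) a, Ψ t ≤ δ * Ψ tstar := by
    simpa using setIntegral_Icc_le_of_le_const (by linarith) hleft hmax
  exact ⟨h1, h2, h3, h3.trans_lt (h2.trans_le h1)⟩
end

section
/- Fix n ≥ 1 and suppose (h*, Q*) ∈ Λ̃ⁿ satisfies the restricted variational inequality: ∑_{p∈P} ∫_{t0}^{tf} Ψ_p(t, h*)(h_p(t) − h*_p(t)) dt − ∑_{ij∈W} Θ_ij[Q*](Q_ij − Q*_ij) ≥ 0 for all (h, Q) ∈ Λ̃ⁿ. Then for every p ∈ P and every k ∈ {1, …, n}: if h*_p > 0 on Iᵏ, then ∫_{Iᵏ} Ψ_p(t, h*) dt = min_{1≤j≤n} ∫_{Iʲ} Ψ_p(t, h*) dt. (Min-interval property (31) in the proof of Theorem 5.2.) -/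
/-!
If `h*_p` equals the constant `c > 0` on `Iᵏ`, shifting that mass from `Iᵏ` to `Iʲ`, i.e. replacing
`h*_p` by `h*_p + c (𝟙_{Iʲ} - 𝟙_{Iᵏ})`, keeps the flow nonnegative and piecewise constant, and
keeps every OD demand because the intervals have equal length, so together with `Q*` it is again
in `Λ̃ⁿ`.
Testing the variational inequality with it, the demand term vanishes and what is left is
`c (∫_{Iʲ} Ψ_p - ∫_{Iᵏ} Ψ_p) ≥ 0`.
-/

open MeasureTheory Set

/-- `g` is a.e. equal to a constant on each interval `Iʲ`, `j = 1, …, n`, of the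
uniform partition of `[t0, tf]` into `n` subintervals. -/
def PiecewiseConstOn (t0 tf : ℝ) (n : ℕ) (g : ℝ → ℝ) : Prop :=
  ∀ j ∈ Finset.Icc 1 n, ∃ c : ℝ,
    ∀ᵐ t ∂(volume.restrict (Icc (t0 + ((j : ℝ) - 1) * ((tf - t0) / n))
        (t0 + (j : ℝ) * ((tf - t0) / n)))), g t = c

/-- Membership in the finite-dimensional approximation `Λ̃ⁿ` of the feasible set. -/
def InLamN {P W : Type*} [Fintype P] [DecidableEq W] (t0 tf : ℝ) (w : P → W) (U : W → ℝ)
    (n : ℕ) (h : P → ℝ → ℝ) (Q : W → ℝ) : Prop :=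
  Feasible t0 tf w h Q ∧ (∀ ij, Q ij ≤ U ij) ∧ ∀ p, PiecewiseConstOn t0 tf n (h p)

/-- The `j`-th interval of the uniform partition of `[t0, tf]` into `n` subintervals. -/
noncomputable def unifI (t0 tf : ℝ) (n j : ℕ) : Set ℝ :=
  Icc (t0 + ((j : ℝ) - 1) * ((tf - t0) / n)) (t0 + (j : ℝ) * ((tf - t0) / n))

section UniformPartition

variable {t0 tf : ℝ} {n : ℕ}

lemma measurableSet_unifI (t0 tf : ℝ) (n m : ℕ) : MeasurableSet (unifI t0 tf n m) :=
  measurableSet_Icc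

lemma unifI_subset_Icc (ht : t0 ≤ tf) {m : ℕ} (hm : m ∈ Finset.Icc 1 n) :
    unifI t0 tf n m ⊆ Icc t0 tf := by
  obtain ⟨h1m, hmn⟩ := Finset.mem_Icc.mp hm
  have hn : (n : ℝ) ≠ 0 := Nat.cast_ne_zero.mpr (by omega)
  have hδ : 0 ≤ (tf - t0) / n := div_nonneg (by linarith) n.cast_nonneg
  have hm1 : (1 : ℝ) ≤ m := by exact_mod_cast h1m
  have hmδ : (m : ℝ) * ((tf - t0) / n) ≤ tf - t0 := by
    calc (m : ℝ) * ((tf - t0) / n) ≤ n * ((tf - t0) / n) := by gcongr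
      _ = tf - t0 := by field_simp
  exact Icc_subset_Icc (by nlinarith) (by linarith)

lemma volume_unifI (t0 tf : ℝ) (n m : ℕ) :
    volume (unifI t0 tf n m) = ENNReal.ofReal ((tf - t0) / n) := by
  rw [unifI, Real.volume_Icc]
  ring_nf

lemma volume_unifI_ne_zero (ht : t0 < tf) (hn : n ≠ 0) (m : ℕ) :
    volume (unifI t0 tf n m) ≠ 0 := by
  rw [volume_unifI, Ne, ENNReal.ofReal_eq_zero, not_le]
  exact div_pos (by linarith) (Nat.cast_pos.mpr (Nat.pos_of_ne_zero hn))

lemma aedisjoint_unifI (t0 tf : ℝ) (n : ℕ) {m l : ℕ} (hml : m ≠ l) :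
    AEDisjoint volume (unifI t0 tf n m) (unifI t0 tf n l) := by
  wlog hlt : m < l generalizing m l
  · exact (this hml.symm (by omega)).symm
  have hml : (m : ℝ) + 1 ≤ l := by exact_mod_cast hlt
  rw [AEDisjoint, unifI, unifI, Icc_inter_Icc, Real.volume_Icc, ENNReal.ofReal_eq_zero]
  rcases le_total 0 ((tf - t0) / n) with hδ | hδ
  · have := min_le_left (t0 + m * ((tf - t0) / n)) (t0 + l * ((tf - t0) / n))
    have := le_max_right (t0 + (m - 1) * ((tf - t0) / n)) (t0 + (l - 1) * ((tf - t0) / n))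
    nlinarith
  · have := min_le_right (t0 + m * ((tf - t0) / n)) (t0 + l * ((tf - t0) / n))
    have := le_max_right (t0 + (m - 1) * ((tf - t0) / n)) (t0 + (l - 1) * ((tf - t0) / n))
    nlinarith

end UniformPartition

namespace PiecewiseConstOn

variable {t0 tf : ℝ} {n : ℕ} {f g : ℝ → ℝ}

lemma sub (hf : PiecewiseConstOn t0 tf n f) (hg : PiecewiseConstOn t0 tf n g) :
    PiecewiseConstOn t0 tf n (f - g) := fun j hj => by
  obtain ⟨a, ha⟩ := hf j hj
  obtain ⟨b, hb⟩ := hg j hj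
  exact ⟨a - b, by filter_upwards [ha, hb] with t hat hbt using by simp [hat, hbt]⟩

lemma add (hf : PiecewiseConstOn t0 tf n f) (hg : PiecewiseConstOn t0 tf n g) :
    PiecewiseConstOn t0 tf n (f + g) := fun j hj => by
  obtain ⟨a, ha⟩ := hf j hj
  obtain ⟨b, hb⟩ := hg j hj
  exact ⟨a + b, by filter_upwards [ha, hb] with t hat hbt using by simp [hat, hbt]⟩

end PiecewiseConstOn

lemma piecewiseConstOn_indicator_unifI (t0 tf : ℝ) (n l : ℕ) (c : ℝ) :
    PiecewiseConstOn t0 tf n ((unifI t0 tf n l).indicator fun _ => c) := by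
  intro m _
  change ∃ b, ∀ᵐ t ∂volume.restrict (unifI t0 tf n m), _ = b
  rcases eq_or_ne m l with rfl | hml
  · exact ⟨c, by filter_upwards [ae_restrict_mem (measurableSet_unifI t0 tf n m)] with t ht
      using indicator_of_mem ht _⟩
  · refine ⟨0, ?_⟩
    have hnull : volume.restrict (unifI t0 tf n m) (unifI t0 tf n l) = 0 := by
      rw [Measure.restrict_apply (measurableSet_unifI t0 tf n l), inter_comm]
      exact aedisjoint_unifI t0 tf n hml
    filter_upwards [measure_eq_zero_iff_ae_notMem.mp hnull] with t ht
      using indicator_of_notMem ht _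

lemma setIntegral_mul_indicator_const {α : Type*} [MeasurableSpace α] {μ : Measure α}
    {s A : Set α} (hs : MeasurableSet s) (hsA : s ⊆ A) (f : α → ℝ) (c : ℝ) :
    ∫ x in A, f x * s.indicator (fun _ => c) x ∂μ = (∫ x in s, f x ∂μ) * c := by
  simp_rw [← indicator_mul_right]
  rw [integral_indicator hs, Measure.restrict_restrict hs, inter_eq_self_of_subset_left hsA,
    integral_mul_const]

noncomputable def massShift (t0 tf : ℝ) (n j k : ℕ) (c : ℝ) : ℝ → ℝ :=
  (unifI t0 tf n j).indicator (fun _ => c) - (unifI t0 tf n k).indicator (fun _ => c)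

section MassShift

variable {t0 tf : ℝ} {n j k : ℕ} {c : ℝ}

lemma piecewiseConstOn_massShift : PiecewiseConstOn t0 tf n (massShift t0 tf n j k c) :=
  (piecewiseConstOn_indicator_unifI t0 tf n j c).sub
    (piecewiseConstOn_indicator_unifI t0 tf n k c)

lemma measurable_massShift : Measurable (massShift t0 tf n j k c) :=
  (measurable_const.indicator (measurableSet_unifI t0 tf n j)).sub
    (measurable_const.indicator (measurableSet_unifI t0 tf n k))

lemma memLp_massShift (p : ENNReal) (μ : Measure ℝ) [IsFiniteMeasure μ] :
    MemLp (massShift t0 tf n j k c) p μ :=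
  ((memLp_const c).indicator (measurableSet_unifI t0 tf n j)).sub
    ((memLp_const c).indicator (measurableSet_unifI t0 tf n k))

lemma setIntegral_mul_massShift (ht : t0 ≤ tf) (hj : j ∈ Finset.Icc 1 n)
    (hk : k ∈ Finset.Icc 1 n) {f : ℝ → ℝ} (hf : IntegrableOn f (Icc t0 tf)) :
    ∫ t in Icc t0 tf, f t * massShift t0 tf n j k c t =
      ((∫ t in unifI t0 tf n j, f t) - ∫ t in unifI t0 tf n k, f t) * c := by
  have hint : ∀ m, Integrable (fun t => f t * (unifI t0 tf n m).indicator (fun _ => c) t)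
      (volume.restrict (Icc t0 tf)) := fun m => by
    simp_rw [← indicator_mul_right]
    exact (hf.mul_const c).indicator (measurableSet_unifI t0 tf n m)
  simp only [massShift, Pi.sub_apply, mul_sub]
  rw [integral_sub (hint j) (hint k),
    setIntegral_mul_indicator_const (measurableSet_unifI t0 tf n j) (unifI_subset_Icc ht hj),
    setIntegral_mul_indicator_const (measurableSet_unifI t0 tf n k) (unifI_subset_Icc ht hk),
    sub_mul]

lemma setIntegral_massShift (ht : t0 ≤ tf) (hj : j ∈ Finset.Icc 1 n)
    (hk : k ∈ Finset.Icc 1 n) : ∫ t in Icc t0 tf, massShift t0 tf n j k c t = 0 := by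
  simpa [setIntegral_const, measureReal_def, volume_unifI] using
    setIntegral_mul_massShift (c := c) (f := fun _ => 1) ht hj hk (integrable_const 1)

lemma add_massShift_nonneg (hc : 0 ≤ c) {x : ℝ → ℝ} {t : ℝ} (hx : 0 ≤ x t)
    (hxk : t ∈ unifI t0 tf n k → x t = c) : 0 ≤ x t + massShift t0 tf n j k c t := by
  have hind : 0 ≤ (unifI t0 tf n j).indicator (fun _ => c) t :=
    indicator_nonneg (fun _ _ => hc) t
  by_cases htk : t ∈ unifI t0 tf n k
  · simp only [massShift, Pi.sub_apply, indicator_of_mem htk, hxk htk]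
    linarith
  · simp only [massShift, Pi.sub_apply, indicator_of_notMem htk]
    linarith

end MassShift

section FlowUpdate

variable {P : Type*} [DecidableEq P] {t0 tf : ℝ}

lemma IsPathFlow.update_add {h : P → ℝ → ℝ} (hh : IsPathFlow t0 tf h) (p : P) {g : ℝ → ℝ}
    (hg : Measurable g) (hg2 : MemLp g 2 (volume.restrict (Icc t0 tf)))
    (hpos : ∀ᵐ t ∂volume.restrict (Icc t0 tf), 0 ≤ h p t + g t) :
    IsPathFlow t0 tf (Function.update h p (h p + g)) := by
  intro q
  rcases eq_or_ne q p with rfl | hq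
  · simp only [Function.update_self]
    exact ⟨(hh q).1.add hg, hpos, (hh q).2.2.add hg2⟩
  · simpa only [Function.update_of_ne hq] using hh q

lemma InLamN.update_add [Fintype P] {W : Type*} [DecidableEq W] {w : P → W} {U : W → ℝ}
    {n : ℕ} {h : P → ℝ → ℝ} {Q : W → ℝ}
    (hmem : InLamN t0 tf w U n h Q) (p : P) {g : ℝ → ℝ} (hg : Measurable g)
    (hg2 : MemLp g 2 (volume.restrict (Icc t0 tf)))
    (hpos : ∀ᵐ t ∂volume.restrict (Icc t0 tf), 0 ≤ h p t + g t)
    (hg0 : ∫ t in Icc t0 tf, g t = 0) (hgc : PiecewiseConstOn t0 tf n g) :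
    InLamN t0 tf w U n (Function.update h p (h p + g)) Q := by
  obtain ⟨⟨hPF, hQ⟩, hQU, hPC⟩ := hmem
  have hint : ∀ q, ∫ t in Icc t0 tf, Function.update h p (h p + g) q t =
      ∫ t in Icc t0 tf, h q t := by
    intro q
    rcases eq_or_ne q p with rfl | hq
    · rw [Function.update_self, Pi.add_def,
        integral_add ((hPF q).2.2.integrable one_le_two) (hg2.integrable one_le_two), hg0, add_zero]
    · rw [Function.update_of_ne hq]
  refine ⟨⟨hPF.update_add p hg hg2 hpos, fun ij => ⟨(hQ ij).1, ?_⟩⟩, hQU, fun q => ?_⟩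
  · simpa only [hint] using (hQ ij).2
  · rcases eq_or_ne q p with rfl | hq
    · simpa only [Function.update_self] using (hPC q).add hgc
    · simpa only [Function.update_of_ne hq] using hPC q

lemma sum_integral_mul_update_add_sub [Fintype P] {α : Type*} [MeasurableSpace α]
    (μ : Measure α) (Ψ h : P → α → ℝ) (p : P) (g : α → ℝ) :
    ∑ q, ∫ t, Ψ q t * (Function.update h p (h p + g) q t - h q t) ∂μ = ∫ t, Ψ p t * g t ∂μ := by
  rw [Finset.sum_eq_single p (fun q _ hq => by simp [Function.update_of_ne hq])
    (fun hp => absurd (Finset.mem_univ p) hp)]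
  simp

end FlowUpdate

theorem restricted_vi_min_interval_general {P W : Type*} [Fintype P] [Fintype W]
    [DecidableEq W]
    (t0 tf : ℝ) (ht : t0 < tf) (w : P → W)
    (U : W → ℝ)
    (Ψ : (P → ℝ → ℝ) → P → ℝ → ℝ) (Θ : (W → ℝ) → W → ℝ)
    (hΨreg : ∀ h : P → ℝ → ℝ, IsPathFlow t0 tf h → ∀ p,
      Measurable (Ψ h p) ∧ (∀ t ∈ Icc t0 tf, 0 < Ψ h p t) ∧
      MemLp (Ψ h p) 2 (volume.restrict (Icc t0 tf)))
    (n : ℕ)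
    (hstar : P → ℝ → ℝ) (Qstar : W → ℝ)
    (hmem : InLamN t0 tf w U n hstar Qstar)
    (hvi : ∀ (h : P → ℝ → ℝ) (Q : W → ℝ), InLamN t0 tf w U n h Q →
      0 ≤ (∑ p, ∫ t in Icc t0 tf, Ψ hstar p t * (h p t - hstar p t))
          - ∑ ij, Θ Qstar ij * (Q ij - Qstar ij)) :
    ∀ p, ∀ k ∈ Finset.Icc 1 n,
      (∀ᵐ t ∂(volume.restrict (unifI t0 tf n k)), 0 < hstar p t) →
      ∀ j ∈ Finset.Icc 1 n,
        (∫ t in unifI t0 tf n k, Ψ hstar p t) ≤ ∫ t in unifI t0 tf n j, Ψ hstar p t := by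
  classical
  intro p k hk hkpos j hj
  obtain ⟨c, hc⟩ : ∃ c, ∀ᵐ t ∂volume.restrict (unifI t0 tf n k), hstar p t = c :=
    hmem.2.2 p k hk
  have hc_pos : 0 < c := by
    have : (ae (volume.restrict (unifI t0 tf n k))).NeBot := ae_neBot.mpr <| by
      rw [Ne, Measure.restrict_eq_zero]
      exact volume_unifI_ne_zero ht (by grind) k
    obtain ⟨t, hct, hpos⟩ := (hc.and hkpos).exists
    exact hct ▸ hpos
  have hshift_nonneg : ∀ᵐ t ∂volume.restrict (Icc t0 tf),
      0 ≤ hstar p t + massShift t0 tf n j k c t := by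
    have hck : ∀ᵐ t ∂volume.restrict (Icc t0 tf), t ∈ unifI t0 tf n k → hstar p t = c :=
      ae_restrict_of_ae ((ae_restrict_iff' (measurableSet_unifI t0 tf n k)).mp hc)
    filter_upwards [(hmem.1.1 p).2.1, hck] with t h0 htk
      using add_massShift_nonneg hc_pos.le h0 htk
  have hvi_shift := hvi _ _ (hmem.update_add p measurable_massShift (memLp_massShift 2 _)
    hshift_nonneg (setIntegral_massShift ht.le hj hk) piecewiseConstOn_massShift)
  rw [sum_integral_mul_update_add_sub, setIntegral_mul_massShift ht.le hj hk
    ((hΨreg hstar hmem.1.1 p).2.2.integrable one_le_two)] at hvi_shift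
  simp only [sub_self, mul_zero, Finset.sum_const_zero, sub_zero] at hvi_shift
  exact sub_nonneg.mp (nonneg_of_mul_nonneg_left hvi_shift hc_pos)

/-- **Min-interval property (31) in the proof of Theorem 5.2**: a solution of the
restricted variational inequality over `Λ̃ⁿ` routes flow on an interval `Iᵏ` only if
`∫_{Iᵏ} Ψ_p` achieves the minimum of `∫_{Iʲ} Ψ_p` over `j = 1, …, n`. -/
theorem restricted_vi_min_interval {P W : Type*} [Fintype P] [Nonempty P] [Fintype W]
    [DecidableEq W]
    (t0 tf : ℝ) (ht : t0 < tf) (w : P → W)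
    (U : W → ℝ) (hU : ∀ ij, 0 < U ij)
    (Ψ : (P → ℝ → ℝ) → P → ℝ → ℝ) (Θ : (W → ℝ) → W → ℝ)
    (hΨreg : ∀ h : P → ℝ → ℝ, IsPathFlow t0 tf h → ∀ p,
      Measurable (Ψ h p) ∧ (∀ t ∈ Icc t0 tf, 0 < Ψ h p t) ∧
      MemLp (Ψ h p) 2 (volume.restrict (Icc t0 tf)))
    (hΘpos : ∀ Q : W → ℝ, (∀ ij, 0 ≤ Q ij) → ∀ ij, 0 < Θ Q ij)
    (n : ℕ) (hn : 1 ≤ n)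
    (hstar : P → ℝ → ℝ) (Qstar : W → ℝ)
    (hmem : InLamN t0 tf w U n hstar Qstar)
    (hvi : ∀ (h : P → ℝ → ℝ) (Q : W → ℝ), InLamN t0 tf w U n h Q →
      0 ≤ (∑ p, ∫ t in Icc t0 tf, Ψ hstar p t * (h p t - hstar p t))
          - ∑ ij, Θ Qstar ij * (Q ij - Qstar ij)) :
    ∀ p, ∀ k ∈ Finset.Icc 1 n,
      (∀ᵐ t ∂(volume.restrict (unifI t0 tf n k)), 0 < hstar p t) →
      ∀ j ∈ Finset.Icc 1 n,
        (∫ t in unifI t0 tf n k, Ψ hstar p t) ≤ ∫ t in unifI t0 tf n j, Ψ hstar p t :=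
  restricted_vi_min_interval_general t0 tf ht w U Ψ Θ hΨreg n hstar Qstar hmem hvi
end
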